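/- Let 𝒢 be a groupoid and ω a normalized U(1)-valued 3-cocycle on 𝒢. Then the transgression t(ω), defined on composable pairs of morphisms of the loop groupoid Λ𝒢 by t(ω)(g → a, a⁻¹ga → b) := ω(g,a,b) · ω(a,b,(ab)⁻¹g(ab)) · ω(a, a⁻¹ga, b)⁻¹, is a normalized U(1)-valued 2-cocycle on Λ𝒢: for every g ∈ End_𝒢(X) and composable a : X → Y, b : Y → Z, c : Z → W one has t(ω)(a⁻¹ga → b, (ab)⁻¹g(ab) → c) · t(ω)(g → a, a⁻¹ga → bc) = t(ω)(g → ab, (ab)⁻¹g(ab) → c) · t(ω)(g → a, a⁻¹ga → b), and t(ω)(g → a, a⁻¹ga → b) = 1 whenever a or b is an identity morphism. -/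

import Mathlib

open CategoryTheory

/-- A normalized `U(1)`-valued 3-cocycle on a groupoid `G`. -/
structure ThreeCocycle (G : Type) [Groupoid.{0} G] : Type where
  toFun : ∀ {X Y Z W : G}, (X ⟶ Y) → (Y ⟶ Z) → (Z ⟶ W) → ℂ
  abs_toFun : ∀ {X Y Z W : G} (f : X ⟶ Y) (g : Y ⟶ Z) (h : Z ⟶ W),
    ‖toFun f g h‖ = 1
  cocycle : ∀ {X₀ X₁ X₂ X₃ X₄ : G} (f : X₀ ⟶ X₁) (g : X₁ ⟶ X₂) (h : X₂ ⟶ X₃) (k : X₃ ⟶ X₄),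
    toFun g h k * toFun f (g ≫ h) k * toFun f g h
      = toFun (f ≫ g) h k * toFun f g (h ≫ k)
  id_fst : ∀ {X Y Z : G} (g : X ⟶ Y) (h : Y ⟶ Z), toFun (𝟙 X) g h = 1
  id_snd : ∀ {X Y Z : G} (g : X ⟶ Y) (h : Y ⟶ Z), toFun g (𝟙 Y) h = 1
  id_thd : ∀ {X Y Z : G} (g : X ⟶ Y) (h : Y ⟶ Z), toFun g h (𝟙 Z) = 1

/-- Conjugation `a⁻¹ g a` of a loop `g ∈ End(X)` by a morphism `a : X ⟶ Y`. -/
def cnj {G : Type} [Groupoid.{0} G] {X Y : G} (g : X ⟶ X) (a : X ⟶ Y) : Y ⟶ Y :=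
  Groupoid.inv a ≫ g ≫ a

/-- `γ_a(g₁,g₂) = ω(g₁,g₂,a) ω(a, a⁻¹g₁a, a⁻¹g₂a) ω(g₁, a, a⁻¹g₂a)⁻¹`. -/
noncomputable def gam {G : Type} [Groupoid.{0} G] (ω : ThreeCocycle G)
    {X Y : G} (a : X ⟶ Y) (g₁ g₂ : X ⟶ X) : ℂ :=
  ω.toFun g₁ g₂ a * ω.toFun a (cnj g₁ a) (cnj g₂ a) * (ω.toFun g₁ a (cnj g₂ a))⁻¹

/-- The `S¹`-transgression `t(ω)` of a 3-cocycle `ω`, evaluated on the composable pair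
`(g → a, a⁻¹ga → b)` of morphisms of the loop groupoid `Λ𝒢`:
`t(ω)(g → a, a⁻¹ga → b) = ω(g,a,b) ω(a,b,(ab)⁻¹g(ab)) ω(a, a⁻¹ga, b)⁻¹`. -/
noncomputable def tOmega {G : Type} [Groupoid.{0} G] (ω : ThreeCocycle G)
    {X Y Z : G} (g : X ⟶ X) (a : X ⟶ Y) (b : Y ⟶ Z) : ℂ :=
  ω.toFun g a b * ω.toFun a b (cnj g (a ≫ b)) * (ω.toFun a (cnj g a) b)⁻¹

/-! The transgression is compatible with coboundaries: the 2-cocycle defect of `t(ω)` at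
`(g → a, a⁻¹ga → b, (ab)⁻¹g(ab) → c)` is, as a rational function of the values of `ω`, the
ratio of the 3-cocycle defects of `ω` at `(a, a⁻¹ga, b, c)`, `(a, b, c, (abc)⁻¹g(abc))` and at
`(g, a, b, c)`, `(a, b, (ab)⁻¹g(ab), c)`, once all loops are moved to the right by
`g a = a (a⁻¹ga)`. Since these defects are `1`, so is the defect of `t(ω)`. -/

lemma cnj_comp {G : Type} [Groupoid.{0} G] {X Y Z : G} (g : X ⟶ X) (a : X ⟶ Y) (b : Y ⟶ Z) :
    cnj g (a ≫ b) = cnj (cnj g a) b := by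
  simp [cnj, Groupoid.inv_eq_inv]

lemma comp_eq_comp_cnj {G : Type} [Groupoid.{0} G] {X Y : G} (g : X ⟶ X) (a : X ⟶ Y) :
    g ≫ a = a ≫ cnj g a := by
  simp [cnj, Groupoid.inv_eq_inv]

namespace ThreeCocycle

variable {G : Type} [Groupoid.{0} G] (ω : ThreeCocycle G)

lemma toFun_ne_zero {X Y Z W : G} (f : X ⟶ Y) (g : Y ⟶ Z) (h : Z ⟶ W) : ω.toFun f g h ≠ 0 :=
  norm_ne_zero_iff.mp (by rw [ω.abs_toFun]; exact one_ne_zero)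

noncomputable def coboundary {X₀ X₁ X₂ X₃ X₄ : G} (f : X₀ ⟶ X₁) (g : X₁ ⟶ X₂) (h : X₂ ⟶ X₃)
    (k : X₃ ⟶ X₄) : ℂ :=
  ω.toFun g h k * ω.toFun f (g ≫ h) k * ω.toFun f g h
    / (ω.toFun (f ≫ g) h k * ω.toFun f g (h ≫ k))

lemma coboundary_eq_one {X₀ X₁ X₂ X₃ X₄ : G} (f : X₀ ⟶ X₁) (g : X₁ ⟶ X₂) (h : X₂ ⟶ X₃)
    (k : X₃ ⟶ X₄) : ω.coboundary f g h k = 1 := by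
  rw [coboundary, ω.cocycle, div_self (mul_ne_zero (ω.toFun_ne_zero _ _ _) (ω.toFun_ne_zero _ _ _))]

end ThreeCocycle

section Transgression

variable {G : Type} [Groupoid.{0} G] (ω : ThreeCocycle G)

lemma tOmega_mul_coboundary {X Y Z W : G} (g : X ⟶ X) (a : X ⟶ Y) (b : Y ⟶ Z) (c : Z ⟶ W) :
    tOmega ω (cnj g a) b c * tOmega ω g a (b ≫ c) * ω.coboundary g a b c
        * ω.coboundary a b (cnj g (a ≫ b)) c
      = tOmega ω g (a ≫ b) c * tOmega ω g a b * ω.coboundary a (cnj g a) b c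
        * ω.coboundary a b c (cnj g (a ≫ b ≫ c)) := by
  simp only [tOmega, ThreeCocycle.coboundary, comp_eq_comp_cnj, ← cnj_comp, Category.assoc]
  field_simp [ω.toFun_ne_zero]

lemma tOmega_cocycle {X Y Z W : G} (g : X ⟶ X) (a : X ⟶ Y) (b : Y ⟶ Z) (c : Z ⟶ W) :
    tOmega ω (cnj g a) b c * tOmega ω g a (b ≫ c) = tOmega ω g (a ≫ b) c * tOmega ω g a b := by
  simpa only [ω.coboundary_eq_one, mul_one] using tOmega_mul_coboundary ω g a b c

lemma tOmega_id_left {X Y : G} (g : X ⟶ X) (b : X ⟶ Y) : tOmega ω g (𝟙 X) b = 1 := by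
  simp [tOmega, ω.id_fst, ω.id_snd]

lemma tOmega_id_right {X Y : G} (g : X ⟶ X) (a : X ⟶ Y) : tOmega ω g a (𝟙 Y) = 1 := by
  simp [tOmega, ω.id_snd, ω.id_thd]

end Transgression

/-- The transgression `t(ω)` of a normalized 3-cocycle `ω` on a groupoid
`𝒢` is a normalized 2-cocycle on the loop groupoid `Λ𝒢`. -/
theorem tOmega_twoCocycle
    (G : Type) [Groupoid.{0} G] (ω : ThreeCocycle G) :
    (∀ (X Y Z W : G) (g : X ⟶ X) (a : X ⟶ Y) (b : Y ⟶ Z) (c : Z ⟶ W),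
      tOmega ω (cnj g a) b c * tOmega ω g a (b ≫ c)
        = tOmega ω g (a ≫ b) c * tOmega ω g a b) ∧
    (∀ (X Y : G) (g : X ⟶ X) (b : X ⟶ Y), tOmega ω g (𝟙 X) b = 1) ∧
    (∀ (X Y : G) (g : X ⟶ X) (a : X ⟶ Y), tOmega ω g a (𝟙 Y) = 1) :=
  ⟨fun _ _ _ _ => tOmega_cocycle ω, fun _ _ => tOmega_id_left ω, fun _ _ => tOmega_id_right ω⟩
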